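/- Let M be a matroid with adjoint map φ to M', and let D be a coindependent set in M. Define H(M,D) as the set of hyperplanes H of M with r_M(H − D) < r_M(H). Then the map φ_{\D}, defined on flats F of M\D by φ_{\D}(F) = φ(cl_M(F)) − φ(H(M,D)), is an adjoint map from M\D to M'\φ(H(M,D)). -/

import Mathlib

open Set

namespace Matroid

variable {α β : Type*}

/-- The rank of a set in a matroid, valued in `ℕ∞`. -/
noncomputable def eRk' (M : Matroid α) (X : Set α) : ℕ∞ :=
  ⨆ I ∈ {I | M.Indep I ∧ I ⊆ X}, I.encard

/-- A hyperplane is a flat of rank `r(M) - 1`. -/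
def Hyperplane' (M : Matroid α) (H : Set α) : Prop :=
  M.IsFlat H ∧ M.eRk' H + 1 = M.eRk' M.E

/-- A point is a rank-one flat. -/
def Point' (M : Matroid α) (P : Set α) : Prop :=
  M.IsFlat P ∧ M.eRk' P = 1

/-- A matroid is simple if every subset of the ground set with at most two elements
is independent (no loops and no parallel pairs). -/
def Simple' (M : Matroid α) : Prop :=
  ∀ X ⊆ M.E, X.encard ≤ 2 → M.Indep X

/-- Deletion of a set from a matroid. -/
def delete' (M : Matroid α) (D : Set α) : Matroid α := M ↾ (M.E \ D)

/-- Contraction of a set in a matroid, defined by duality. -/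
def contract' (M : Matroid α) (C : Set α) : Matroid α := (M✶.delete' C)✶

/-- `φ` is an adjoint map from `M` to `M'` : `M'` is simple of the same rank as `M`,
`φ` maps flats of `M` to flats of `M'` injectively, reversing inclusion, and restricts
to a bijection from the hyperplanes of `M` onto the points of `M'`. -/
def IsAdjointMap (M : Matroid α) (M' : Matroid β) (φ : Set α → Set β) : Prop :=
  M'.Simple' ∧ M'.eRk' M'.E = M.eRk' M.E ∧
  (∀ F, M.IsFlat F → M'.IsFlat (φ F)) ∧
  (∀ ⦃F₁ F₂⦄, M.IsFlat F₁ → M.IsFlat F₂ → φ F₁ = φ F₂ → F₁ = F₂) ∧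
  (∀ ⦃F₁ F₂⦄, M.IsFlat F₁ → M.IsFlat F₂ → F₁ ⊆ F₂ → φ F₂ ⊆ φ F₁) ∧
  (∀ H, M.Hyperplane' H → M'.Point' (φ H)) ∧
  (∀ P, M'.Point' P → ∃ H, M.Hyperplane' H ∧ φ H = P)

/-- `IsMinor N M` means `N` is obtained from `M` by a sequence of deletions and
contractions. -/
inductive IsMinor' : Matroid α → Matroid α → Prop
  | refl (M : Matroid α) : IsMinor' M M
  | delete {M N : Matroid α} (h : IsMinor' N M) (D : Set α) : IsMinor' (N.delete' D) M
  | contract {M N : Matroid α} (h : IsMinor' N M) (C : Set α) : IsMinor' (N.contract' C) M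

/-- `M` has an adjoint. -/
def HasAdjoint (M : Matroid α) : Prop :=
  ∃ (M' : Matroid (Set α)) (φ : Set α → Set (Set α)), IsAdjointMap M M' φ


lemma Indep.encard_le_eRk' {M : Matroid α} {I X : Set α} (hI : M.Indep I) (hIX : I ⊆ X) :
    I.encard ≤ M.eRk' X :=
  le_iSup₂ (f := fun I (_ : I ∈ {I | M.Indep I ∧ I ⊆ X}) => I.encard) I ⟨hI, hIX⟩

lemma eRk'_le_iff {M : Matroid α} {X : Set α} {c : ℕ∞} :
    M.eRk' X ≤ c ↔ ∀ I, M.Indep I → I ⊆ X → I.encard ≤ c := by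
  rw [eRk', iSup₂_le_iff]
  exact ⟨fun h I hI hIX => h I ⟨hI, hIX⟩, fun h I hI => h I hI.1 hI.2⟩

lemma IsBasis'.eRk'_eq {M : Matroid α} {I X : Set α} (hI : M.IsBasis' I X) :
    M.eRk' X = I.encard := by
  refine le_antisymm (eRk'_le_iff.2 fun J hJ hJX => ?_) (hI.indep.encard_le_eRk' hI.subset)
  obtain ⟨J', hJ', hJJ'⟩ := hJ.subset_isBasis'_of_subset hJX
  rw [← hJ'.encard_eq_encard hI]
  exact encard_mono hJJ'

lemma IsBasis.eRk'_eq {M : Matroid α} {I X : Set α} (hI : M.IsBasis I X) :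
    M.eRk' X = I.encard := hI.isBasis'.eRk'_eq

lemma Indep.eRk'_eq {M : Matroid α} {I : Set α} (hI : M.Indep I) :
    M.eRk' I = I.encard := hI.isBasis_self.eRk'_eq

lemma eRk'_mono (M : Matroid α) {X Y : Set α} (h : X ⊆ Y) : M.eRk' X ≤ M.eRk' Y :=
  eRk'_le_iff.2 fun I hI hIX => hI.encard_le_eRk' (hIX.trans h)

lemma eRk'_closure_eq (M : Matroid α) (X : Set α) : M.eRk' (M.closure X) = M.eRk' X := by
  obtain ⟨I, hI⟩ := M.exists_isBasis' X
  rw [hI.eRk'_eq, hI.isBasis_closure_right.eRk'_eq]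

lemma eRk'_ne_top (M : Matroid α) [M.Finite] (X : Set α) : M.eRk' X ≠ ⊤ := by
  have h : M.eRk' X ≤ M.E.encard := eRk'_le_iff.2 fun I hI _ => encard_mono hI.subset_ground
  intro ht
  rw [ht, top_le_iff, encard_eq_top_iff] at h
  exact h M.ground_finite

lemma flat_closure (M : Matroid α) (X : Set α) : M.IsFlat (M.closure X) := by
  rw [closure_def]
  have hne : {F | M.IsFlat F ∧ X ∩ M.E ⊆ F}.Nonempty := ⟨M.E, M.ground_isFlat, inter_subset_right⟩
  rw [sInter_eq_iInter]
  have : Nonempty {F // F ∈ {F | M.IsFlat F ∧ X ∩ M.E ⊆ F}} := hne.to_subtype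
  exact IsFlat.iInter fun F => F.2.1


/-! ### Section B : flats and ranks -/

lemma IsFlat.eRk'_add_one_le {M : Matroid α} {F G : Set α} (hF : M.IsFlat F) (_hG : M.IsFlat G)
    (hFG : F ⊆ G) {x : α} (hxG : x ∈ G) (hxF : x ∉ F) : M.eRk' F + 1 ≤ M.eRk' G := by
  obtain ⟨I, hI⟩ := M.exists_isBasis F hF.subset_ground
  have hclI : M.closure I = F := by rw [hI.closure_eq_closure, hF.closure]
  have hxI : x ∉ I := fun h => hxF (hI.subset h)
  have hxE : x ∈ M.E := _hG.subset_ground hxG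
  have hxcl : x ∉ M.closure I := by rw [hclI]; exact hxF
  have hins : M.Indep (insert x I) :=
    (hI.indep.insert_indep_iff_of_notMem hxI).2 ⟨hxE, hxcl⟩
  have hsub : insert x I ⊆ G := insert_subset hxG (hI.subset.trans hFG)
  calc M.eRk' F + 1 = (insert x I).encard := by
        rw [hI.eRk'_eq, encard_insert_of_notMem hxI]
    _ ≤ M.eRk' G := hins.encard_le_eRk' hsub

lemma IsFlat.eq_of_subset_of_eRk'_le {M : Matroid α} {F G : Set α} (hF : M.IsFlat F)
    (hG : M.IsFlat G) (hFG : F ⊆ G) (hr : M.eRk' G ≤ M.eRk' F) (hfin : M.eRk' F ≠ ⊤) :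
    F = G := by
  by_contra hne
  obtain ⟨x, hxG, hxF⟩ := exists_of_ssubset (hFG.ssubset_of_ne hne)
  have := (hF.eRk'_add_one_le hG hFG hxG hxF).trans hr
  exact (ENat.add_one_le_iff hfin).1 this |>.ne rfl

/-- Adding a non-element of a flat to it increases rank by exactly one. -/
lemma IsFlat.eRk'_closure_insert {M : Matroid α} {F : Set α} (hF : M.IsFlat F) {e : α}
    (heE : e ∈ M.E) (heF : e ∉ F) :
    M.eRk' (M.closure (insert e F)) = M.eRk' F + 1 := by
  obtain ⟨I, hI⟩ := M.exists_isBasis F hF.subset_ground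
  have hclI : M.closure I = F := by rw [hI.closure_eq_closure, hF.closure]
  have heI : e ∉ I := fun h => heF (hI.subset h)
  have hins : M.Indep (insert e I) :=
    (hI.indep.insert_indep_iff_of_notMem heI).2 ⟨heE, by rw [hclI]; exact heF⟩
  have hcl : M.closure (insert e I) = M.closure (insert e F) := by
    rw [← closure_insert_closure_eq_closure_insert, hclI]
  rw [← hcl, eRk'_closure_eq, hins.eRk'_eq, hI.eRk'_eq,
    encard_insert_of_notMem heI]

/-- In a simple matroid, singletons of ground elements are closed. -/
lemma Simple'.closure_singleton {M : Matroid α} (hM : M.Simple') {e : α} (he : e ∈ M.E) :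
    M.closure {e} = {e} := by
  have hei : M.Indep {e} := hM {e} (singleton_subset_iff.2 he) (by simp)
  refine subset_antisymm (fun y hy => ?_) (M.subset_closure {e} (by simpa))
  have hyE : y ∈ M.E := M.mem_ground_of_mem_closure hy
  rw [hei.mem_closure_iff'] at hy
  refine hy.2 (hM _ ?_ ?_)
  · exact insert_subset hyE (by simpa)
  · exact (encard_insert_le _ _).trans (by norm_num)

lemma Simple'.point_iff_singleton {M : Matroid α} (hM : M.Simple') {P : Set α} :
    M.Point' P ↔ ∃ e ∈ M.E, P = {e} := by
  constructor
  · rintro ⟨hP, hr⟩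
    obtain ⟨I, hI⟩ := M.exists_isBasis P hP.subset_ground
    rw [hI.eRk'_eq, encard_eq_one] at hr
    obtain ⟨e, rfl⟩ := hr
    have he : e ∈ M.E := hI.indep.subset_ground rfl
    refine ⟨e, he, ?_⟩
    rw [← hP.closure, ← hI.closure_eq_closure, hM.closure_singleton he]
  · rintro ⟨e, he, rfl⟩
    have hei : M.Indep {e} := hM {e} (singleton_subset_iff.2 he) (by simp)
    refine ⟨?_, by rw [hei.eRk'_eq, encard_singleton]⟩
    rw [← hM.closure_singleton he]
    exact M.flat_closure {e}


/-! ### Section C : consequences of being an adjoint map -/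

variable {M : Matroid α} {M' : Matroid β} {φ : Set α → Set β}

lemma IsAdjointMap.chain_le [M.Finite] (hφ : IsAdjointMap M M' φ) :
    ∀ n (I₁ I₂ : Set α), M.Indep I₂ → I₁ ⊆ I₂ → (I₂ \ I₁).ncard = n →
      M'.eRk' (φ (M.closure I₂)) + (I₂ \ I₁).encard ≤ M'.eRk' (φ (M.closure I₁)) := by
  obtain ⟨hS, hrk, hfl, hinj, hrev, hpt, hsur⟩ := hφ
  intro n
  induction n with
  | zero =>
    intro I₁ I₂ hI₂ hsub hn
    have hfin : (I₂ \ I₁).Finite := M.set_finite _ (diff_subset.trans hI₂.subset_ground)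
    have : I₂ \ I₁ = ∅ := (ncard_eq_zero hfin).1 hn
    have hEq : I₁ = I₂ := hsub.antisymm (diff_eq_empty.1 this)
    rw [this, hEq]
    simp
  | succ n IH =>
    intro I₁ I₂ hI₂ hsub hn
    have hfin : (I₂ \ I₁).Finite := M.set_finite _ (diff_subset.trans hI₂.subset_ground)
    obtain ⟨y, hy⟩ := nonempty_of_ncard_ne_zero (by rw [hn]; exact Nat.succ_ne_zero n)
    set I₁' := insert y I₁ with hI₁'def
    have hI₁sub' : I₁' ⊆ I₂ := insert_subset hy.1 hsub
    have hI₁'indep : M.Indep I₁' := hI₂.subset hI₁sub'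
    have hI₁indep : M.Indep I₁ := hI₂.subset hsub
    have hyE : y ∈ M.E := hI₂.subset_ground hy.1
    have hdiff : I₂ \ I₁' = (I₂ \ I₁) \ {y} := by
      rw [hI₁'def, ← union_singleton, ← diff_diff]
    have hncard : (I₂ \ I₁').ncard = n := by
      have h1 : ((I₂ \ I₁) \ {y}).ncard + 1 = (I₂ \ I₁).ncard :=
        ncard_diff_singleton_add_one hy hfin
      rw [hdiff]; omega
    have hencard : (I₂ \ I₁').encard + 1 = (I₂ \ I₁).encard := by
      rw [hdiff]; exact encard_diff_singleton_add_one hy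
    -- strict inclusion of closures
    have hclsub : M.closure I₁ ⊆ M.closure I₁' :=
      M.closure_subset_closure (subset_insert _ _)
    have hyncl : y ∉ M.closure I₁ :=
      (hI₁indep.notMem_closure_iff_of_notMem hy.2 hyE).2 hI₁'indep
    have hycl' : y ∈ M.closure I₁' := M.mem_closure_of_mem' (mem_insert _ _) hyE
    have hclne : M.closure I₁ ≠ M.closure I₁' := fun h => hyncl (h ▸ hycl')
    have hphisub : φ (M.closure I₁') ⊆ φ (M.closure I₁) :=
      hrev (M.flat_closure I₁) (M.flat_closure I₁') hclsub
    have hphine : φ (M.closure I₁') ≠ φ (M.closure I₁) := fun h =>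
      hclne (hinj (M.flat_closure I₁) (M.flat_closure I₁') h.symm)
    obtain ⟨x, hx1, hx2⟩ := exists_of_ssubset (hphisub.ssubset_of_ne hphine)
    have hstep : M'.eRk' (φ (M.closure I₁')) + 1 ≤ M'.eRk' (φ (M.closure I₁)) :=
      IsFlat.eRk'_add_one_le (hfl _ (M.flat_closure I₁')) (hfl _ (M.flat_closure I₁))
        hphisub hx1 hx2
    have hIH := IH I₁' I₂ hI₂ hI₁sub' hncard
    calc M'.eRk' (φ (M.closure I₂)) + (I₂ \ I₁).encard
        = (M'.eRk' (φ (M.closure I₂)) + (I₂ \ I₁').encard) + 1 := by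
          rw [← hencard, add_assoc]
      _ ≤ M'.eRk' (φ (M.closure I₁')) + 1 := add_le_add_left hIH 1
      _ ≤ M'.eRk' (φ (M.closure I₁)) := hstep

/-- The rank formula : `r'(φ F) + r(F) = r(M)` for every flat `F`. -/
lemma IsAdjointMap.eRk'_phi_add [M.Finite] (hφ : IsAdjointMap M M' φ) {F : Set α}
    (hF : M.IsFlat F) : M'.eRk' (φ F) + M.eRk' F = M.eRk' M.E := by
  obtain ⟨I, hI⟩ := M.exists_isBasis F hF.subset_ground
  obtain ⟨B, hB, hIB⟩ := hI.indep.exists_isBase_superset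
  have hclI : M.closure I = F := by rw [hI.closure_eq_closure, hF.closure]
  have hclB : M.closure B = M.E := hB.closure_eq
  have hrE : M.eRk' M.E = B.encard := hB.isBasis_ground.eRk'_eq
  have hrF : M.eRk' F = I.encard := hI.eRk'_eq
  -- upper bound
  have hup := hφ.chain_le I.ncard ∅ I hI.indep (empty_subset I) (by rw [diff_empty])
  rw [diff_empty, hclI] at hup
  have hPhiCl0 : M'.eRk' (φ (M.closure ∅)) ≤ M.eRk' M.E := by
    rw [← hφ.2.1]
    exact M'.eRk'_mono (hφ.2.2.1 _ (M.flat_closure ∅)).subset_ground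
  -- lower bound
  have hlow := hφ.chain_le (B \ I).ncard I B hB.indep hIB rfl
  rw [hclI, hclB] at hlow
  have hlow' : (B \ I).encard ≤ M'.eRk' (φ F) := le_trans le_add_self hlow
  refine le_antisymm ?_ ?_
  · rw [hrF]; exact (hup.trans hPhiCl0)
  · calc M.eRk' M.E = (B \ I).encard + I.encard := by
          rw [hrE, encard_diff_add_encard_of_subset hIB]
      _ ≤ M'.eRk' (φ F) + M.eRk' F := by rw [hrF]; exact add_le_add_left hlow' _


lemma Simple'.flat_eRk'_zero {M : Matroid α} (hM : M.Simple') {W : Set α}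
    (hW : W ⊆ M.E) (hr : M.eRk' W = 0) : W = ∅ := by
  rw [eq_empty_iff_forall_notMem]
  intro x hx
  have hxi : M.Indep {x} := hM {x} (singleton_subset_iff.2 (hW hx)) (by simp)
  have := hxi.encard_le_eRk' (singleton_subset_iff.2 hx)
  rw [encard_singleton, hr] at this
  simp at this

lemma IsAdjointMap.phi_ground [M.Finite] (hφ : IsAdjointMap M M' φ) : φ M.E = ∅ := by
  have h := hφ.eRk'_phi_add M.ground_isFlat
  have hne : M.eRk' M.E ≠ ⊤ := M.eRk'_ne_top M.E
  have h0 : M'.eRk' (φ M.E) + M.eRk' M.E = 0 + M.eRk' M.E := by rw [h, zero_add]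
  have hz : M'.eRk' (φ M.E) = 0 := WithTop.add_right_cancel hne h0
  exact hφ.1.flat_eRk'_zero (hφ.2.2.1 _ M.ground_isFlat).subset_ground hz

lemma IsFlat.eq_ground_of_eRk'_eq {M : Matroid α} [M.Finite] {F : Set α} (hF : M.IsFlat F)
    (hr : M.eRk' F = M.eRk' M.E) : F = M.E :=
  hF.eq_of_subset_of_eRk'_le M.ground_isFlat hF.subset_ground (le_of_eq hr.symm)
    (M.eRk'_ne_top F)

/-- **Key Lemma (A)** : if `H` is a hyperplane and `F` is a flat not contained in `H`,
then the point `φ H = {e}` is not in `φ F`. -/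
lemma IsAdjointMap.notMem_phi [M.Finite] (hφ : IsAdjointMap M M' φ) {F H : Set α}
    (hF : M.IsFlat F) (hH : M.Hyperplane' H) (hFH : ¬ F ⊆ H) {e : β} (he : φ H = {e}) :
    e ∉ φ F := by
  obtain ⟨hS, hrk, hfl, hinj, hrev, hpt, hsur⟩ := hφ
  have hr_ne : M.eRk' M.E ≠ ⊤ := M.eRk'_ne_top M.E
  obtain ⟨x, hxF, hxH⟩ := not_subset.1 hFH
  have hxE : x ∈ M.E := hF.subset_ground hxF
  have hcl0H : M.closure ∅ ⊆ H := by
    rw [← hH.1.closure]; exact M.closure_subset_closure (empty_subset H)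
  have hxcl0 : x ∉ M.closure ∅ := fun h => hxH (hcl0H h)
  -- the point P = cl {x}
  have hPF : M.closure {x} ⊆ F := by
    rw [← hF.closure]; exact M.closure_subset_closure (singleton_subset_iff.2 hxF)
  have hphiFP : φ F ⊆ φ (M.closure {x}) := hrev (M.flat_closure {x}) hF hPF
  -- a basis of H
  obtain ⟨J, hJ⟩ := M.exists_isBasis H hH.1.subset_ground
  have hJH : J ⊆ H := hJ.subset
  have hclJ : M.closure J = H := by rw [hJ.closure_eq_closure, hH.1.closure]
  have hJfin : J.Finite := M.set_finite J hJ.indep.subset_ground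
  have heE' : e ∈ M'.E := (hfl H hH.1).subset_ground (by rw [he]; exact rfl)
  -- main induction
  have main : ∀ n (A : Set α), A ⊆ J → (J \ A).ncard = n →
      e ∉ φ (M.closure (insert x A)) := by
    intro n
    induction n with
    | zero =>
      intro A hAJ hcard
      have hAeq : A = J := by
        have : J \ A = ∅ := (ncard_eq_zero (hJfin.subset diff_subset)).1 hcard
        exact hAJ.antisymm (diff_eq_empty.1 this)
      subst hAeq
      have hxA : x ∉ A := fun h => hxH (hJH h)
      have hxclA : x ∉ M.closure A := by rw [hclJ]; exact hxH
      have hins : M.Indep (insert x A) :=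
        (hJ.indep.insert_indep_iff_of_notMem hxA).2 ⟨hxE, hxclA⟩
      have hrankL : M.eRk' (M.closure (insert x A)) = M.eRk' M.E := by
        rw [eRk'_closure_eq, hins.eRk'_eq, encard_insert_of_notMem hxA, ← hJ.eRk'_eq]
        exact hH.2
      have hLE : M.closure (insert x A) = M.E :=
        (M.flat_closure _).eq_ground_of_eRk'_eq hrankL
      rw [hLE, IsAdjointMap.phi_ground ⟨hS, hrk, hfl, hinj, hrev, hpt, hsur⟩]
      exact notMem_empty e
    | succ n IH =>
      intro A hAJ hcard
      intro heLA
      have hJAfin : (J \ A).Finite := hJfin.subset diff_subset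
      obtain ⟨y, hy⟩ := nonempty_of_ncard_ne_zero (by rw [hcard]; exact Nat.succ_ne_zero n)
      set A' := insert y A with hA'def
      have hA'J : A' ⊆ J := insert_subset hy.1 hAJ
      have hcard' : (J \ A').ncard = n := by
        have hdiff : J \ A' = (J \ A) \ {y} := by rw [hA'def, ← union_singleton, ← diff_diff]
        have h1 : ((J \ A) \ {y}).ncard + 1 = (J \ A).ncard :=
          ncard_diff_singleton_add_one hy hJAfin
        rw [hdiff]; omega
      by_cases heLA' : e ∈ φ (M.closure (insert x A'))
      · exact IH A' hA'J hcard' heLA'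
      -- the core contradiction
      have hAindep : M.Indep A := hJ.indep.subset hAJ
      have hA'indep : M.Indep A' := hJ.indep.subset hA'J
      have hxA : x ∉ A := fun h => hxH (hJH (hAJ h))
      have hxy : x ≠ y := fun h => hxH (hJH (h ▸ hy.1))
      have hxA' : x ∉ A' := by
        rintro (h | h)
        · exact hxy h
        · exact hxA h
      have hclAH : M.closure A ⊆ H := by
        rw [← hclJ]; exact M.closure_subset_closure hAJ
      have hclA'H : M.closure A' ⊆ H := by
        rw [← hclJ]; exact M.closure_subset_closure hA'J
      have hxclA : x ∉ M.closure A := fun h => hxH (hclAH h)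
      have hxclA' : x ∉ M.closure A' := fun h => hxH (hclA'H h)
      have hinsA : M.Indep (insert x A) :=
        (hAindep.insert_indep_iff_of_notMem hxA).2 ⟨hxE, hxclA⟩
      have hinsA' : M.Indep (insert x A') :=
        (hA'indep.insert_indep_iff_of_notMem hxA').2 ⟨hxE, hxclA'⟩
      have hyA : y ∉ A := hy.2
      -- ranks
      have hkfin : A.encard ≠ ⊤ := (hJfin.subset hAJ).encard_lt_top.ne
      have hrQA' : M.eRk' (M.closure A') = A.encard + 1 := by
        rw [eRk'_closure_eq, hA'indep.eRk'_eq, hA'def, encard_insert_of_notMem hyA]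
      have hrLA : M.eRk' (M.closure (insert x A)) = A.encard + 1 := by
        rw [eRk'_closure_eq, hinsA.eRk'_eq, encard_insert_of_notMem hxA]
      have hrLA' : M.eRk' (M.closure (insert x A')) = A.encard + 1 + 1 := by
        rw [eRk'_closure_eq, hinsA'.eRk'_eq, encard_insert_of_notMem hxA', hA'def,
          encard_insert_of_notMem hyA]
      -- e ∈ φ (closure A')
      have hQA'H : M.closure A' ⊆ H := hclA'H
      have heQA' : e ∈ φ (M.closure A') := by
        have := hrev (M.flat_closure A') hH.1 hQA'H
        rw [he] at this
        exact this rfl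
      -- the flat V
      have hφ' : IsAdjointMap M M' φ := ⟨hS, hrk, hfl, hinj, hrev, hpt, hsur⟩
      set LA := M.closure (insert x A) with hLAdef
      set LA' := M.closure (insert x A') with hLA'def
      set QA' := M.closure A' with hQA'def
      set V := M'.closure (insert e (φ LA')) with hVdef
      have hrV : M'.eRk' V = M'.eRk' (φ LA') + 1 :=
        (hfl _ (M.flat_closure _)).eRk'_closure_insert heE' heLA'
      have hphiLA'QA' : φ LA' ⊆ φ QA' :=
        hrev (M.flat_closure A') (M.flat_closure (insert x A'))
          (M.closure_subset_closure (subset_insert _ _))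
      have hVsub : V ⊆ φ QA' := by
        have hsub1 : insert e (φ LA') ⊆ φ QA' := insert_subset heQA' hphiLA'QA'
        calc V ⊆ M'.closure (φ QA') := M'.closure_subset_closure hsub1
          _ = φ QA' := (hfl _ (M.flat_closure A')).closure
      -- rank computations via the rank formula
      have hformLA' := hφ'.eRk'_phi_add (M.flat_closure (insert x A'))
      have hformQA' := hφ'.eRk'_phi_add (M.flat_closure A')
      have hformLA := hφ'.eRk'_phi_add (M.flat_closure (insert x A))
      rw [← hLA'def, hrLA'] at hformLA'
      rw [← hQA'def, hrQA'] at hformQA'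
      rw [← hLAdef, hrLA] at hformLA
      have hsum : M'.eRk' V + (A.encard + 1) = M'.eRk' (φ QA') + (A.encard + 1) := by
        rw [hrV, hformQA']
        rw [← hformLA']
        ring
      have hk1fin : A.encard + 1 ≠ ⊤ := by
        rw [Ne, ENat.add_eq_top]
        simp [hkfin]
      have hrVQ : M'.eRk' V = M'.eRk' (φ QA') := WithTop.add_right_cancel hk1fin hsum
      have hQfin : M'.eRk' (φ QA') ≠ ⊤ := fun h =>
        hr_ne (by rw [← hformQA', h, top_add])
      have hVfin : M'.eRk' V ≠ ⊤ := by rw [hrVQ]; exact hQfin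
      have hVQ : V = φ QA' :=
        (M'.flat_closure _).eq_of_subset_of_eRk'_le (hfl _ (M.flat_closure A')) hVsub
          (le_of_eq hrVQ.symm) hVfin
      -- V ⊆ φ LA
      have hphiLA'LA : φ LA' ⊆ φ LA :=
        hrev (M.flat_closure (insert x A)) (M.flat_closure (insert x A'))
          (M.closure_subset_closure (insert_subset_insert (subset_insert _ _)))
      have hVsubLA : V ⊆ φ LA := by
        have hsub1 : insert e (φ LA') ⊆ φ LA := insert_subset heLA hphiLA'LA
        calc V ⊆ M'.closure (φ LA) := M'.closure_subset_closure hsub1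
          _ = φ LA := (hfl _ (M.flat_closure _)).closure
      -- equality of φ QA' and φ LA
      have hrQL : M'.eRk' (φ LA) ≤ M'.eRk' (φ QA') := by
        have : M'.eRk' (φ LA) + (A.encard + 1) = M'.eRk' (φ QA') + (A.encard + 1) := by
          rw [hformLA, hformQA']
        exact le_of_eq (WithTop.add_right_cancel hk1fin this)
      have hQLeq : φ QA' = φ LA :=
        (hfl _ (M.flat_closure A')).eq_of_subset_of_eRk'_le (hfl _ (M.flat_closure _))
          (hVQ ▸ hVsubLA) hrQL (hrVQ ▸ hVfin)
      have hQLA : QA' = LA := hinj (M.flat_closure A') (M.flat_closure (insert x A)) hQLeq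
      have hxLA : x ∈ LA := M.mem_closure_of_mem' (mem_insert _ _) hxE
      have hxQA' : x ∉ QA' := hxclA'
      rw [hQLA] at hxQA'
      exact hxQA' hxLA
  -- conclude
  intro heF
  have := main (J \ ∅).ncard ∅ (empty_subset J) rfl
  rw [insert_empty_eq] at this
  exact this (hphiFP heF)


/-! ### Section D : restriction lemmas -/

lemma indep_of_not_mem_closure_diff {M : Matroid β} {S : Set β} (hSE : S ⊆ M.E)
    (h : ∀ e ∈ S, e ∉ M.closure (S \ {e})) : M.Indep S := by
  obtain ⟨I, hI⟩ := M.exists_isBasis S hSE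
  by_cases hIS : I = S
  · rw [← hIS]; exact hI.indep
  obtain ⟨x, hxS, hxI⟩ := exists_of_ssubset (hI.subset.ssubset_of_ne hIS)
  have hxcl : x ∈ M.closure I := hI.subset_closure hxS
  have hsub : I ⊆ S \ {x} := fun y hy => ⟨hI.subset hy, fun h' => hxI (h' ▸ hy)⟩
  exact absurd (M.closure_subset_closure hsub hxcl) (h x hxS)

lemma Indep.not_mem_closure_diff' {M : Matroid α} {I : Set α} {b : α} (hI : M.Indep I)
    (hb : b ∈ I) : b ∉ M.closure (I \ {b}) := by
  have h2 : M.Indep (insert b (I \ {b})) := by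
    rwa [insert_diff_singleton, insert_eq_of_mem hb]
  exact ((hI.subset diff_subset).notMem_closure_iff_of_notMem
    (fun h : b ∈ I \ {b} => h.2 rfl) (hI.subset_ground hb)).2 h2

lemma restrict_closure_eq_inter {M : Matroid α} {R X : Set α} (hXR : X ⊆ R) (hR : R ⊆ M.E) :
    (M ↾ R).closure X = M.closure X ∩ R := by
  have hXR' : X ⊆ (M ↾ R).E := by rwa [restrict_ground_eq]
  obtain ⟨I, hI⟩ := (M ↾ R).exists_isBasis X hXR'
  have hIi : M.Indep I := (restrict_indep_iff.1 hI.indep).1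
  have hIR : I ⊆ R := (restrict_indep_iff.1 hI.indep).2
  have step2 : (M ↾ R).closure I = M.closure I ∩ R := by
    ext y
    simp only [hI.indep.mem_closure_iff', hIi.mem_closure_iff', restrict_indep_iff,
      restrict_ground_eq, mem_inter_iff]
    constructor
    · rintro ⟨hyR, himp⟩
      exact ⟨⟨hR hyR, fun hind => himp ⟨hind, insert_subset hyR hIR⟩⟩, hyR⟩
    · rintro ⟨⟨_, himp⟩, hyR⟩
      exact ⟨hyR, fun hind => himp hind.1⟩
  have step3 : M.closure I = M.closure X := by
    refine subset_antisymm (M.closure_subset_closure hI.subset) ?_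
    refine M.closure_subset_closure_of_subset_closure ?_
    intro y hy
    have := hI.subset_closure hy
    rw [step2] at this
    exact this.1
  rw [← hI.closure_eq_closure, step2, step3]

lemma restrict_eRk'_eq {M : Matroid α} {R X : Set α} (hXR : X ⊆ R) :
    (M ↾ R).eRk' X = M.eRk' X := by
  refine le_antisymm (eRk'_le_iff.2 fun I hI hIX => ?_) (eRk'_le_iff.2 fun I hI hIX => ?_)
  · exact (restrict_indep_iff.1 hI).1.encard_le_eRk' hIX
  · exact (restrict_indep_iff.2 ⟨hI, hIX.trans hXR⟩).encard_le_eRk' hIX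

lemma IsFlat.diff_flat_restrict {M : Matroid α} {G Z : Set α} (hG : M.IsFlat G) :
    (M ↾ (M.E \ Z)).IsFlat (G \ Z) := by
  have hsub : G \ Z ⊆ M.E \ Z := diff_subset_diff_left hG.subset_ground
  have hcl : (M ↾ (M.E \ Z)).closure (G \ Z) = G \ Z := by
    rw [restrict_closure_eq_inter hsub diff_subset]
    refine subset_antisymm ?_ (subset_inter
      (M.subset_closure _ (hsub.trans diff_subset)) hsub)
    intro y hy
    have h1 : y ∈ G := by
      have := M.closure_subset_closure (diff_subset (s := G) (t := Z)) hy.1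
      rwa [hG.closure] at this
    exact ⟨h1, hy.2.2⟩
  rw [← hcl]
  exact flat_closure _ _

lemma IsFlat.restrict_diff_eq {M : Matroid α} {F Z : Set α} (hF : (M ↾ (M.E \ Z)).IsFlat F) :
    F = M.closure F \ Z := by
  have hFsub : F ⊆ M.E \ Z := hF.subset_ground
  calc F = (M ↾ (M.E \ Z)).closure F := hF.closure.symm
    _ = M.closure F ∩ (M.E \ Z) := restrict_closure_eq_inter hFsub diff_subset
    _ = M.closure F \ Z := by
        ext y
        simp only [mem_inter_iff, mem_diff]
        exact ⟨fun h => ⟨h.1, h.2.2⟩, fun h => ⟨h.1, M.closure_subset_ground F h.1, h.2⟩⟩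


/-! ### Main theorem -/

theorem stmt8' (M : Matroid α) (M' : Matroid β) [M.Finite] (φ : Set α → Set β)
    (hφ : IsAdjointMap M M' φ) (D : Set α) (hD : M.Coindep D) :
    IsAdjointMap (M.delete' D)
      (M'.delete' (⋃ H ∈ {H | M.Hyperplane' H ∧ M.eRk' (H \ D) < M.eRk' H}, φ H))
      (fun F => φ (M.closure F) \
        ⋃ H ∈ {H | M.Hyperplane' H ∧ M.eRk' (H \ D) < M.eRk' H}, φ H) := by
  obtain ⟨hS, hrk, hfl, hinj, hrev, hpt, hsur⟩ := hφ
  have hφ' : IsAdjointMap M M' φ := ⟨hS, hrk, hfl, hinj, hrev, hpt, hsur⟩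
  set U := ⋃ H ∈ {H | M.Hyperplane' H ∧ M.eRk' (H \ D) < M.eRk' H}, φ H with hUdef
  have hmemU : ∀ {y : β}, y ∈ U ↔
      ∃ H, (M.Hyperplane' H ∧ M.eRk' (H \ D) < M.eRk' H) ∧ y ∈ φ H := by
    intro y
    rw [hUdef]
    simp only [mem_iUnion, exists_prop, mem_setOf_eq]
  have hsingle : ∀ {H : Set α}, M.Hyperplane' H → ∃ e, φ H = {e} := by
    intro H hH
    obtain ⟨e, _, he⟩ := hS.point_iff_singleton.1 (hpt _ hH)
    exact ⟨e, he⟩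
  have hgood : ∀ {H : Set α} {e : β}, M.Hyperplane' H → φ H = {e} →
      M.eRk' H ≤ M.eRk' (H \ D) → e ∉ U := by
    intro H e hH hHe hle hmem
    obtain ⟨H', hH', heH'⟩ := hmemU.1 hmem
    obtain ⟨e', _, hφH'⟩ := hS.point_iff_singleton.1 (hpt H' hH'.1)
    rw [hφH'] at heH'
    have : φ H' = φ H := by rw [hφH', hHe, heH']
    have hHH' : H' = H := hinj hH'.1.1 hH.1 this
    rw [hHH'] at hH'
    exact absurd hH'.2 (not_lt.2 hle)
  -- base avoiding D
  obtain ⟨B₀, hB₀, hB₀D⟩ := hD.exists_isBase_subset_compl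
  have hB₀E : B₀ ⊆ M.E := hB₀.subset_ground
  have hrE : M.eRk' M.E = B₀.encard := hB₀.isBasis_ground.eRk'_eq
  have hEspan : M.E ⊆ M.closure (M.E \ D) :=
    calc M.E = M.closure B₀ := hB₀.closure_eq.symm
      _ ⊆ M.closure (M.E \ D) := M.closure_subset_closure hB₀D
  have hNrank : (M.delete' D).eRk' (M.E \ D) = M.eRk' M.E := by
    rw [delete', restrict_eRk'_eq Subset.rfl]
    refine le_antisymm (M.eRk'_mono diff_subset) ?_
    rw [hrE]
    exact hB₀.indep.encard_le_eRk' hB₀D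
  have hNrank' : (M.delete' D).eRk' (M.delete' D).E = M.eRk' M.E := hNrank
  have hypBase : ∀ {B : Set α} {b : α}, M.IsBase B → b ∈ B →
      M.Hyperplane' (M.closure (B \ {b})) := by
    intro B b hB hb
    refine ⟨M.flat_closure _, ?_⟩
    rw [eRk'_closure_eq, (hB.indep.subset diff_subset).eRk'_eq,
      encard_diff_singleton_add_one hb, ← hB.isBasis_ground.eRk'_eq]
  have hgoodBase : ∀ {B : Set α} {b : α}, M.IsBase B → b ∈ B → B ⊆ M.E \ D →
      M.eRk' (M.closure (B \ {b})) ≤ M.eRk' (M.closure (B \ {b}) \ D) := by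
    intro B b hB hb hBD
    have hsub : B \ {b} ⊆ M.closure (B \ {b}) \ D := fun y hy =>
      ⟨M.subset_closure _ (diff_subset.trans hB.subset_ground) hy, (hBD hy.1).2⟩
    calc M.eRk' (M.closure (B \ {b})) = (B \ {b}).encard := by
          rw [eRk'_closure_eq, (hB.indep.subset diff_subset).eRk'_eq]
      _ ≤ _ := (hB.indep.subset diff_subset).encard_le_eRk' hsub
  refine ⟨?_, ?_, ?_, ?_, ?_, ?_, ?_⟩
  -- 1 : simplicity
  · intro X hX hcard
    have hX' : X ⊆ M'.E \ U := hX
    show (M' ↾ (M'.E \ U)).Indep X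
    rw [restrict_indep_iff]
    exact ⟨hS X (hX'.trans diff_subset) hcard, hX'⟩
  -- 2 : ranks agree
  · rw [hNrank']
    have h4 : (M'.delete' U).eRk' (M'.delete' U).E = M'.eRk' (M'.E \ U) :=
      restrict_eRk'_eq Subset.rfl
    rw [h4]
    refine le_antisymm ((M'.eRk'_mono diff_subset).trans (le_of_eq hrk)) ?_
    rw [hrE]
    rcases eq_empty_or_nonempty B₀ with hB₀e | ⟨b₀, hb₀⟩
    · rw [hB₀e]; simp
    have hne : Nonempty β := by
      obtain ⟨e, _⟩ := hsingle (hypBase hB₀ hb₀)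
      exact ⟨e⟩
    have hch : ∀ b ∈ B₀, ∃ e, φ (M.closure (B₀ \ {b})) = {e} :=
      fun b hb => hsingle (hypBase hB₀ hb)
    choose! f hf using hch
    have hfmem : ∀ b ∈ B₀, f b ∈ φ (M.closure (B₀ \ {b})) := fun b hb => by
      rw [hf b hb]; rfl
    have hinjOn : InjOn f B₀ := by
      intro b hb b' hb' hbb'
      by_contra hne'
      have h1 : b ∈ M.closure (B₀ \ {b'}) :=
        M.subset_closure _ (diff_subset.trans hB₀E) ⟨hb, fun h => hne' h⟩
      have hEq : M.closure (B₀ \ {b}) = M.closure (B₀ \ {b'}) :=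
        hinj (M.flat_closure _) (M.flat_closure _) (by rw [hf b hb, hf b' hb', hbb'])
      rw [← hEq] at h1
      exact hB₀.indep.not_mem_closure_diff' hb h1
    have hSsub : f '' B₀ ⊆ M'.E \ U := by
      rintro _ ⟨b, hb, rfl⟩
      exact ⟨(hfl _ (M.flat_closure _)).subset_ground (hfmem b hb),
        hgood (hypBase hB₀ hb) (hf b hb) (hgoodBase hB₀ hb hB₀D)⟩
    have hSind : M'.Indep (f '' B₀) := by
      refine indep_of_not_mem_closure_diff (hSsub.trans diff_subset) ?_
      rintro _ ⟨b, hb, rfl⟩ hmem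
      have hbE : b ∈ M.E := hB₀E hb
      have hsub2 : f '' B₀ \ {f b} ⊆ φ (M.closure {b}) := by
        rintro _ ⟨⟨b', hb', rfl⟩, hne2⟩
        have hbb' : b ≠ b' := fun h => hne2 (by rw [h]; exact rfl)
        have hclb : M.closure {b} ⊆ M.closure (B₀ \ {b'}) := by
          refine M.closure_subset_closure_of_subset_closure ?_
          exact singleton_subset_iff.2
            (M.subset_closure _ (diff_subset.trans hB₀E) ⟨hb, fun h => hbb' h⟩)
        exact hrev (M.flat_closure {b}) (M.flat_closure (B₀ \ {b'})) hclb (hfmem b' hb')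
      have hmem2 : f b ∈ φ (M.closure {b}) := by
        have h3 : M'.closure (f '' B₀ \ {f b}) ⊆ φ (M.closure {b}) :=
          calc M'.closure (f '' B₀ \ {f b}) ⊆ M'.closure (φ (M.closure {b})) :=
                M'.closure_subset_closure hsub2
            _ = φ (M.closure {b}) := (hfl _ (M.flat_closure _)).closure
        exact h3 hmem
      have hnotsub : ¬ M.closure {b} ⊆ M.closure (B₀ \ {b}) := fun hcon =>
        hB₀.indep.not_mem_closure_diff' hb (hcon (M.mem_closure_self b hbE))
      exact hφ'.notMem_phi (M.flat_closure {b}) (hypBase hB₀ hb) hnotsub (hf b hb) hmem2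
    calc B₀.encard = (f '' B₀).encard := hinjOn.encard_image.symm
      _ ≤ M'.eRk' (M'.E \ U) := hSind.encard_le_eRk' hSsub
  -- 3 : flats to flats
  · intro F hF
    show (M' ↾ (M'.E \ U)).IsFlat (φ (M.closure F) \ U)
    exact (hfl _ (M.flat_closure F)).diff_flat_restrict
  -- 4 : injectivity
  · have key : ∀ F₁ F₂, (M.delete' D).IsFlat F₁ → (M.delete' D).IsFlat F₂ →
        φ (M.closure F₁) \ U = φ (M.closure F₂) \ U → F₂ ⊆ F₁ := by
      intro F₁ F₂ hF₁ hF₂ heq x hxF₂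
      by_contra hxF₁
      have hF₁R : F₁ ⊆ M.E \ D := hF₁.subset_ground
      have hF₂R : F₂ ⊆ M.E \ D := hF₂.subset_ground
      have hxR : x ∈ M.E \ D := hF₂R hxF₂
      have hF₁eq : F₁ = M.closure F₁ \ D := IsFlat.restrict_diff_eq hF₁
      have hxG₁ : x ∉ M.closure F₁ := fun hmem =>
        hxF₁ (hF₁eq ▸ (⟨hmem, hxR.2⟩ : x ∈ M.closure F₁ \ D))
      obtain ⟨I, hI⟩ := M.exists_isBasis F₁ (hF₁R.trans diff_subset)
      have hxI : x ∉ I := fun h =>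
        hxG₁ (M.subset_closure _ (hF₁R.trans diff_subset) (hI.subset h))
      have hins : M.Indep (insert x I) :=
        (hI.indep.insert_indep_iff_of_notMem hxI).2
          ⟨hxR.1, by rw [hI.closure_eq_closure]; exact hxG₁⟩
      have hsubR : insert x I ⊆ M.E \ D := insert_subset hxR (hI.subset.trans hF₁R)
      obtain ⟨B, hB, hsubB⟩ := hins.subset_isBasis_of_subset hsubR diff_subset
      have hBbase : M.IsBase B := hB.indep.isBase_of_ground_subset_closure
        (hEspan.trans (M.closure_subset_closure_of_subset_closure hB.subset_closure))
      have hxB : x ∈ B := hsubB (mem_insert _ _)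
      have hBD : B ⊆ M.E \ D := hB.subset
      obtain ⟨e, he⟩ := hsingle (hypBase hBbase hxB)
      have heU : e ∉ U := hgood (hypBase hBbase hxB) he (hgoodBase hBbase hxB hBD)
      have hG₁H : M.closure F₁ ⊆ M.closure (B \ {x}) := by
        have hIB : I ⊆ B \ {x} := fun y hy =>
          ⟨hsubB (mem_insert_of_mem _ hy), fun h => hxI (h ▸ hy)⟩
        rw [← hI.closure_eq_closure]
        exact M.closure_subset_closure hIB
      have he1 : e ∈ φ (M.closure F₁) :=
        hrev (M.flat_closure F₁) (M.flat_closure _) hG₁H (by rw [he]; rfl)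
      have hnotsub : ¬ M.closure F₂ ⊆ M.closure (B \ {x}) := fun hcon =>
        hBbase.indep.not_mem_closure_diff' hxB
          (hcon (M.subset_closure _ (hF₂R.trans diff_subset) hxF₂))
      have he2 : e ∉ φ (M.closure F₂) :=
        hφ'.notMem_phi (M.flat_closure F₂) (hypBase hBbase hxB) hnotsub he
      have hmem3 : e ∈ φ (M.closure F₂) \ U :=
        heq ▸ (⟨he1, heU⟩ : e ∈ φ (M.closure F₁) \ U)
      exact he2 hmem3.1
    intro F₁ F₂ hF₁ hF₂ heq
    exact (key F₂ F₁ hF₂ hF₁ heq.symm).antisymm (key F₁ F₂ hF₁ hF₂ heq)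
  -- 5 : order reversing
  · intro F₁ F₂ hF₁ hF₂ h12
    exact diff_subset_diff_left
      (hrev (M.flat_closure F₁) (M.flat_closure F₂) (M.closure_subset_closure h12))
  -- 6 : hyperplanes to points
  · intro K hK
    have hKsub : K ⊆ M.E \ D := hK.1.subset_ground
    have hKrM : M.eRk' K + 1 = M.eRk' M.E := by
      have h2 := hK.2
      have h4 : (M.delete' D).eRk' K = M.eRk' K := restrict_eRk'_eq hKsub
      rw [h4, hNrank'] at h2
      exact h2
    have hGhyp : M.Hyperplane' (M.closure K) :=
      ⟨M.flat_closure K, by rw [eRk'_closure_eq]; exact hKrM⟩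
    have hKeq : K = M.closure K \ D := IsFlat.restrict_diff_eq hK.1
    have hle : M.eRk' (M.closure K) ≤ M.eRk' (M.closure K \ D) := by
      rw [← hKeq, eRk'_closure_eq]
    obtain ⟨e, he⟩ := hsingle hGhyp
    have heU : e ∉ U := hgood hGhyp he hle
    have heE' : e ∈ M'.E :=
      (hfl _ (M.flat_closure K)).subset_ground (by rw [he]; rfl)
    have hψ : φ (M.closure K) \ U = {e} := by
      rw [he]
      exact diff_subset.antisymm (singleton_subset_iff.2 ⟨rfl, heU⟩)
    refine ⟨(hfl _ (M.flat_closure K)).diff_flat_restrict, ?_⟩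
    show (M'.delete' U).eRk' (φ (M.closure K) \ U) = 1
    rw [hψ]
    have h4 : (M'.delete' U).eRk' {e} = M'.eRk' {e} :=
      restrict_eRk'_eq (singleton_subset_iff.2 ⟨heE', heU⟩)
    rw [h4, (hS {e} (singleton_subset_iff.2 heE') (by simp)).eRk'_eq, encard_singleton]
  -- 7 : surjectivity onto points
  · intro P hP
    have hPsub : P ⊆ M'.E \ U := hP.1.subset_ground
    have hPrM : M'.eRk' P = 1 := by
      have h2 := hP.2
      have h4 : (M'.delete' U).eRk' P = M'.eRk' P := restrict_eRk'_eq hPsub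
      rw [h4] at h2
      exact h2
    have hQpt : M'.Point' (M'.closure P) :=
      ⟨M'.flat_closure P, by rw [eRk'_closure_eq]; exact hPrM⟩
    obtain ⟨H, hHhyp, hφH⟩ := hsur _ hQpt
    obtain ⟨e, heE, hQe⟩ := hS.point_iff_singleton.1 hQpt
    have hPe : P = {e} := by
      have hPQ : P ⊆ M'.closure P := M'.subset_closure P (hPsub.trans diff_subset)
      rw [hQe] at hPQ
      rcases subset_singleton_iff_eq.1 hPQ with h | h
      · rw [h] at hPrM
        rw [M'.empty_indep.eRk'_eq] at hPrM
        simp at hPrM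
      · exact h
    have heP : e ∈ P := by rw [hPe]; rfl
    have heU : e ∉ U := (hPsub heP).2
    have hHnb : M.eRk' H ≤ M.eRk' (H \ D) := by
      by_contra hlt
      push_neg at hlt
      exact heU (hmemU.2 ⟨H, ⟨hHhyp, hlt⟩, by rw [hφH, hQe]; exact rfl⟩)
    have heqr : M.eRk' (H \ D) = M.eRk' H :=
      le_antisymm (M.eRk'_mono diff_subset) hHnb
    have hclHD : M.closure (H \ D) = H := by
      refine (M.flat_closure _).eq_of_subset_of_eRk'_le hHhyp.1 ?_ ?_ (M.eRk'_ne_top _)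
      · have hsub5 : M.closure (H \ D) ⊆ M.closure H := M.closure_subset_closure diff_subset
        rwa [hHhyp.1.closure] at hsub5
      · rw [eRk'_closure_eq, heqr]
    refine ⟨H \ D, ⟨IsFlat.diff_flat_restrict hHhyp.1, ?_⟩, ?_⟩
    · have h4 : (M.delete' D).eRk' (H \ D) = M.eRk' (H \ D) :=
        restrict_eRk'_eq (diff_subset_diff_left hHhyp.1.subset_ground)
      rw [h4, hNrank', heqr]
      exact hHhyp.2
    · show φ (M.closure (H \ D)) \ U = P
      rw [hclHD, hφH, hQe, hPe]
      exact diff_subset.antisymm (singleton_subset_iff.2 ⟨rfl, heU⟩)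

/-- If `φ` is an adjoint map from `M` to `M'` and `D` is coindependent in `M`, then
`F ↦ φ (cl_M F) \ φ(H(M,D))` is an adjoint map from `M ＼ D` to `M' ＼ φ(H(M,D))`, where
`H(M,D)` is the set of hyperplanes `H` of `M` with `r_M(H \ D) < r_M(H)`. -/
theorem stmt8 (M : Matroid α) (M' : Matroid β) [M.Finite] (φ : Set α → Set β)
    (hφ : IsAdjointMap M M' φ) (D : Set α) (hD : M.Coindep D) :
    IsAdjointMap (M.delete' D)
      (M'.delete' (⋃ H ∈ {H | M.Hyperplane' H ∧ M.eRk' (H \ D) < M.eRk' H}, φ H))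
      (fun F => φ (M.closure F) \
        ⋃ H ∈ {H | M.Hyperplane' H ∧ M.eRk' (H \ D) < M.eRk' H}, φ H) :=
  stmt8' M M' φ hφ D hD
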